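/- arXiv:math/0106241 — 5 statements merged into one kernel-verified Lean document; each statement's English description precedes it below -/
import Mathlib

section
/- For each integer r ≥ 1, the assignment T_i(e_j) = e_j − q_i^r · ([r·a_{ji}]_{q_j}/[r]_{q_j}) · e_i (for i, j in I, with T_i(e_j) = e_j when i ≠ j interpreted via the Cartan matrix entry a_{ji}) defines a representation of the braid group B of g on the vector space C(q)^n with standard basis e_1, …, e_n; i.e., the operators T_i satisfy the braid relations T_iT_j = T_jT_i if a_{ij}a_{ji} = 0, T_iT_jT_i = T_jT_iT_j if a_{ij}a_{ji} = 1, (T_iT_j)^2 = (T_jT_i)^2 if a_{ij}a_{ji} = 2, and (T_iT_j)^3 = (T_jT_i)^3 if a_{ij}a_{ji} = 3. -/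
/- STATEMENT 0: The operators `T_i e_j = e_j − q_i^r [r a_{ji}]_j/[r]_j e_i` define a
representation of the braid group of `g` on `C(q)^n`, i.e. they satisfy the braid relations
according to the value of `a_{ij} a_{ji}`. -/

noncomputable section

/-- The field `ℂ(q)`. -/
abbrev Kq : Type := RatFunc ℂ

/-- The indeterminate `q`. -/
noncomputable def qvar : Kq := RatFunc.X

/-- The quantum integer `[m]_q = (q^m − q^{−m})/(q − q^{−1})`. -/
noncomputable def qint (q : Kq) (m : ℤ) : Kq := (q ^ m - q ^ (-m)) / (q - q⁻¹)

/-- The operator `T_i` on `C(q)^n` determined by `T_i e_j = e_j − q_i^r [r a_{ji}]_j/[r]_j e_i`. -/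
noncomputable def T0 {n : ℕ} (A : Matrix (Fin n) (Fin n) ℤ) (d : Fin n → ℕ) (r : ℕ)
    (i : Fin n) (v : Fin n → Kq) : Fin n → Kq :=
  fun k =>
    if k = i then
      v i - ∑ j, (qvar ^ d i) ^ r * qint (qvar ^ d j) (r * A j i) / qint (qvar ^ d j) r * v j
    else v k

/-
Each `T_i` is a pseudo-reflection `v ↦ v - ⟨c_i, v⟩ e_i`: it changes only the `i`-th coordinate.
A word in `T_i`, `T_j` therefore moves `v` only along `e_i` and `e_j`, by amounts that are
polynomial in `⟨c_i, v⟩`, `⟨c_j, v⟩` and the four coefficients `c_ii, c_ij, c_ji, c_jj`, so each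
braid relation is a polynomial identity in these. Since `[r m]_q / [r]_q = [m]_{q^r}`, writing
`s_k = q_k^r` the coefficients are `c_ii = s_i^2 + 1` and `c_ij = s_i [a_ji]_{s_j}`; when
`a_ij = -1` symmetrizability forces `s_i = s_j^{-a_ji}`, and the identities then hold for every `s_j`.
-/

section PseudoReflection

variable {K ι : Type*} [CommRing K] [Fintype ι] [DecidableEq ι] (c : ι → ι → K)

def pseudoRefl (i : ι) (v : ι → K) : ι → K :=
  Function.update v i (v i - ∑ m, c i m * v m)

variable {c} {i j : ι}

theorem pseudoRefl_add_single_add_single (hij : i ≠ j) (v : ι → K) (a b : K) :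
    pseudoRefl c i (v + Pi.single i a + Pi.single j b) =
      v + Pi.single i (a - (∑ m, c i m * v m + c i i * a + c i j * b)) + Pi.single j b := by
  have hsum : ∑ m, c i m * (v + Pi.single i a + Pi.single j b : ι → K) m =
      ∑ m, c i m * v m + c i i * a + c i j * b := by
    simp [mul_add, Finset.sum_add_distrib, Pi.single_apply]
  funext k
  rw [pseudoRefl, hsum]
  rcases eq_or_ne k i with rfl | hki
  · simp only [Function.update_self, Pi.add_apply, Pi.single_eq_same,
      Pi.single_eq_of_ne hij, add_zero]
    ring
  · simp [hki]

theorem pseudoRefl_add_single_add_single' (hij : i ≠ j) (v : ι → K) (a b : K) :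
    pseudoRefl c j (v + Pi.single i a + Pi.single j b) =
      v + Pi.single i a + Pi.single j (b - (∑ m, c j m * v m + c j j * b + c j i * a)) := by
  simpa only [add_right_comm _ (Pi.single i _)] using
    pseudoRefl_add_single_add_single hij.symm v b a

theorem pseudoRefl_comm (hij : i ≠ j) (h₁ : c i j = 0) (h₂ : c j i = 0) :
    pseudoRefl c i ∘ pseudoRefl c j = pseudoRefl c j ∘ pseudoRefl c i := by
  funext v
  rw [show v = v + Pi.single i 0 + Pi.single j 0 by simp]
  simp only [Function.comp_apply, pseudoRefl_add_single_add_single hij,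
    pseudoRefl_add_single_add_single' hij, h₁, h₂]
  exact congrArg₂ (fun x y => v + Pi.single i x + Pi.single j y) (by ring) (by ring)

theorem pseudoRefl_braid_three (hij : i ≠ j) (t : K) (hcii : c i i = t ^ 2 + 1)
    (hcjj : c j j = t ^ 2 + 1) (hcij : c i j = -t) (hcji : c j i = -t) :
    pseudoRefl c i ∘ pseudoRefl c j ∘ pseudoRefl c i =
      pseudoRefl c j ∘ pseudoRefl c i ∘ pseudoRefl c j := by
  funext v
  rw [show v = v + Pi.single i 0 + Pi.single j 0 by simp]
  simp only [Function.comp_apply, pseudoRefl_add_single_add_single hij,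
    pseudoRefl_add_single_add_single' hij, hcii, hcjj, hcij, hcji]
  exact congrArg₂ (fun x y => v + Pi.single i x + Pi.single j y) (by ring) (by ring)

theorem pseudoRefl_braid_four (hij : i ≠ j) (s : K) (hcii : c i i = s ^ 4 + 1)
    (hcjj : c j j = s ^ 2 + 1) (hcij : c i j = -(s ^ 3 + s)) (hcji : c j i = -s) :
    (pseudoRefl c i ∘ pseudoRefl c j) ∘ (pseudoRefl c i ∘ pseudoRefl c j) =
      (pseudoRefl c j ∘ pseudoRefl c i) ∘ (pseudoRefl c j ∘ pseudoRefl c i) := by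
  funext v
  rw [show v = v + Pi.single i 0 + Pi.single j 0 by simp]
  simp only [Function.comp_apply, pseudoRefl_add_single_add_single hij,
    pseudoRefl_add_single_add_single' hij, hcii, hcjj, hcij, hcji]
  exact congrArg₂ (fun x y => v + Pi.single i x + Pi.single j y) (by ring) (by ring)

theorem pseudoRefl_braid_six (hij : i ≠ j) (s : K) (hcii : c i i = s ^ 6 + 1)
    (hcjj : c j j = s ^ 2 + 1) (hcij : c i j = -(s ^ 5 + s ^ 3 + s)) (hcji : c j i = -s) :
    (pseudoRefl c i ∘ pseudoRefl c j) ∘ (pseudoRefl c i ∘ pseudoRefl c j) ∘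
        (pseudoRefl c i ∘ pseudoRefl c j) =
      (pseudoRefl c j ∘ pseudoRefl c i) ∘ (pseudoRefl c j ∘ pseudoRefl c i) ∘
        (pseudoRefl c j ∘ pseudoRefl c i) := by
  funext v
  rw [show v = v + Pi.single i 0 + Pi.single j 0 by simp]
  simp only [Function.comp_apply, pseudoRefl_add_single_add_single hij,
    pseudoRefl_add_single_add_single' hij, hcii, hcjj, hcij, hcji]
  exact congrArg₂ (fun x y => v + Pi.single i x + Pi.single j y) (by ring) (by ring)

end PseudoReflection

theorem qvar_pow_ne_one {k : ℕ} (hk : k ≠ 0) : qvar ^ k ≠ 1 := by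
  intro h
  have hX : (Polynomial.X ^ k : Polynomial ℂ) = 1 := by
    apply RatFunc.algebraMap_injective ℂ
    rw [map_pow, RatFunc.algebraMap_X, map_one]
    exact h
  simpa [hk] using congrArg Polynomial.natDegree hX

theorem qvar_pow_sub_inv_ne_zero {k : ℕ} (hk : k ≠ 0) : qvar ^ k - (qvar ^ k)⁻¹ ≠ 0 := by
  have hq : qvar ^ k ≠ 0 := pow_ne_zero _ RatFunc.X_ne_zero
  intro h
  apply qvar_pow_ne_one (k := k + k) (by omega)
  rw [pow_add]
  nth_rw 2 [sub_eq_zero.mp h]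
  exact mul_inv_cancel₀ hq

theorem qint_zero (q : Kq) : qint q 0 = 0 := by
  simp [qint]

theorem qint_neg (q : Kq) (m : ℤ) : qint q (-m) = -qint q m := by
  rw [qint, qint, neg_neg, ← neg_div, neg_sub]

theorem qint_one {q : Kq} (hq : q - q⁻¹ ≠ 0) : qint q 1 = 1 := by
  simp [qint, hq]

theorem qint_two {q : Kq} (hq : q - q⁻¹ ≠ 0) : qint q 2 = q + q⁻¹ := by
  have hq0 : q ≠ 0 := by rintro rfl; simp at hq
  rw [qint, eq_comm, eq_div_iff hq]
  simp only [zpow_neg, zpow_ofNat]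
  field_simp
  ring

theorem qint_three {q : Kq} (hq : q - q⁻¹ ≠ 0) : qint q 3 = q ^ 2 + 1 + q⁻¹ ^ 2 := by
  have hq0 : q ≠ 0 := by rintro rfl; simp at hq
  rw [qint, eq_comm, eq_div_iff hq]
  simp only [zpow_neg, zpow_ofNat]
  field_simp
  ring

theorem qint_natCast_ne_zero {D r : ℕ} (hD : D ≠ 0) (hr : r ≠ 0) : qint (qvar ^ D) r ≠ 0 := by
  rw [qint, zpow_neg, zpow_natCast, ← pow_mul]
  exact div_ne_zero (qvar_pow_sub_inv_ne_zero (by positivity)) (qvar_pow_sub_inv_ne_zero hD)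

theorem qint_mul_div_qint {q : Kq} {r : ℤ} (h : qint q r ≠ 0) (m : ℤ) :
    qint q (r * m) / qint q r = qint (q ^ r) m := by
  have hq : q - q⁻¹ ≠ 0 := fun h0 => h (by simp [qint, h0])
  rw [qint, qint, qint, div_div_div_cancel_right₀ hq, zpow_mul, neg_mul_eq_mul_neg, zpow_mul,
    zpow_neg q r]

theorem eq_neg_one_or_eq_neg_one_of_mul_eq {a b k : ℤ} (ha : a ≤ 0) (hb : b ≤ 0) (hab : a * b = k)
    (hk : 1 ≤ k) (hk3 : k ≤ 3) : a = -1 ∧ b = -k ∨ a = -k ∧ b = -1 := by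
  subst hab
  have ha1 : a ≤ -1 := by by_contra! h; simp [show a = 0 by omega] at hk
  have hb1 : b ≤ -1 := by by_contra! h; simp [show b = 0 by omega] at hk
  have ha3 : -3 ≤ a := by nlinarith
  have hb3 : -3 ≤ b := by nlinarith
  interval_cases a <;> interval_cases b <;> omega

theorem eq_zero_and_eq_zero_of_mul_eq_zero {a b di dj : ℤ} (hdi : di ≠ 0) (hdj : dj ≠ 0)
    (hsym : di * a = dj * b) (hab : a * b = 0) : a = 0 ∧ b = 0 := by
  rcases mul_eq_zero.mp hab with rfl | rfl <;> simp_all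

section CartanCoefficients

variable {n : ℕ} (A : Matrix (Fin n) (Fin n) ℤ) (d : Fin n → ℕ) (r : ℕ)

def braidCoeff (l k : Fin n) : Kq :=
  (qvar ^ d l) ^ r * qint (qvar ^ d k) (r * A k l) / qint (qvar ^ d k) r

theorem T0_eq_pseudoRefl : T0 A d r = pseudoRefl (braidCoeff A d r) := by
  funext i v k
  simp only [T0, pseudoRefl, Function.update_apply]
  rfl

variable {A d r} {i j k l : Fin n}

theorem braidCoeff_eq (hdk : d k ≠ 0) (hr : r ≠ 0) :
    braidCoeff A d r l k = qvar ^ (d l * r) * qint (qvar ^ (d k * r)) (A k l) := by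
  rw [braidCoeff, mul_div_assoc, qint_mul_div_qint (qint_natCast_ne_zero hdk hr), zpow_natCast,
    ← pow_mul, ← pow_mul]

theorem braidCoeff_of_eq_zero (h : A k l = 0) : braidCoeff A d r l k = 0 := by
  simp [braidCoeff, h, qint_zero]

theorem braidCoeff_self (h : A l l = 2) (hdl : d l ≠ 0) (hr : r ≠ 0) :
    braidCoeff A d r l l = (qvar ^ (d l * r)) ^ 2 + 1 := by
  have hq : (qvar : Kq) ^ (d l * r) ≠ 0 := pow_ne_zero _ RatFunc.X_ne_zero
  rw [braidCoeff_eq hdl hr, h, qint_two (qvar_pow_sub_inv_ne_zero (by positivity))]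
  field_simp

theorem braidCoeff_of_eq_neg_one (h : A k l = -1) (hdk : d k ≠ 0) (hr : r ≠ 0) :
    braidCoeff A d r l k = -qvar ^ (d l * r) := by
  rw [braidCoeff_eq hdk hr, h, qint_neg, qint_one (qvar_pow_sub_inv_ne_zero (by positivity)),
    mul_neg_one]

theorem braidCoeff_of_eq_neg_two (h : A k l = -2) (hd : d l = 2 * d k) (hdk : d k ≠ 0)
    (hr : r ≠ 0) : braidCoeff A d r l k = -((qvar ^ (d k * r)) ^ 3 + qvar ^ (d k * r)) := by
  have hq : (qvar : Kq) ^ (d k * r) ≠ 0 := pow_ne_zero _ RatFunc.X_ne_zero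
  rw [braidCoeff_eq hdk hr, h, qint_neg, qint_two (qvar_pow_sub_inv_ne_zero (by positivity)), hd,
    mul_assoc, pow_mul']
  field_simp

theorem braidCoeff_of_eq_neg_three (h : A k l = -3) (hd : d l = 3 * d k) (hdk : d k ≠ 0)
    (hr : r ≠ 0) :
    braidCoeff A d r l k =
      -((qvar ^ (d k * r)) ^ 5 + (qvar ^ (d k * r)) ^ 3 + qvar ^ (d k * r)) := by
  have hq : (qvar : Kq) ^ (d k * r) ≠ 0 := pow_ne_zero _ RatFunc.X_ne_zero
  rw [braidCoeff_eq hdk hr, h, qint_neg, qint_three (qvar_pow_sub_inv_ne_zero (by positivity)), hd,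
    mul_assoc, pow_mul']
  field_simp

end CartanCoefficients

section BraidRelations

variable {n : ℕ} {A : Matrix (Fin n) (Fin n) ℤ} {d : Fin n → ℕ} {r : ℕ} {i j : Fin n}

theorem braidCoeff_braid_three (hij : i ≠ j) (hi : A i i = 2) (hj : A j j = 2)
    (hAij : A i j = -1) (hAji : A j i = -1) (hsym : (d i : ℤ) * A i j = d j * A j i)
    (hdj : d j ≠ 0) (hr : r ≠ 0) :
    pseudoRefl (braidCoeff A d r) i ∘ pseudoRefl (braidCoeff A d r) j ∘
        pseudoRefl (braidCoeff A d r) i =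
      pseudoRefl (braidCoeff A d r) j ∘ pseudoRefl (braidCoeff A d r) i ∘
        pseudoRefl (braidCoeff A d r) j := by
  have hd : d i = d j := by rw [hAij, hAji] at hsym; omega
  have hdi : d i ≠ 0 := hd ▸ hdj
  refine pseudoRefl_braid_three hij (qvar ^ (d j * r)) ?_ (braidCoeff_self hj hdj hr) ?_
    (braidCoeff_of_eq_neg_one hAij hdi hr)
  · rw [braidCoeff_self hi hdi hr, hd]
  · rw [braidCoeff_of_eq_neg_one hAji hdj hr, hd]

theorem braidCoeff_braid_four (hij : i ≠ j) (hi : A i i = 2) (hj : A j j = 2)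
    (hAij : A i j = -1) (hAji : A j i = -2) (hsym : (d i : ℤ) * A i j = d j * A j i)
    (hdj : d j ≠ 0) (hr : r ≠ 0) :
    (pseudoRefl (braidCoeff A d r) i ∘ pseudoRefl (braidCoeff A d r) j) ∘
        (pseudoRefl (braidCoeff A d r) i ∘ pseudoRefl (braidCoeff A d r) j) =
      (pseudoRefl (braidCoeff A d r) j ∘ pseudoRefl (braidCoeff A d r) i) ∘
        (pseudoRefl (braidCoeff A d r) j ∘ pseudoRefl (braidCoeff A d r) i) := by
  have hd : d i = 2 * d j := by rw [hAij, hAji] at hsym; omega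
  have hdi : d i ≠ 0 := by omega
  refine pseudoRefl_braid_four hij (qvar ^ (d j * r)) ?_ (braidCoeff_self hj hdj hr)
    (braidCoeff_of_eq_neg_two hAji hd hdj hr) (braidCoeff_of_eq_neg_one hAij hdi hr)
  rw [braidCoeff_self hi hdi hr, hd, mul_assoc, pow_mul', ← pow_mul]

theorem braidCoeff_braid_six (hij : i ≠ j) (hi : A i i = 2) (hj : A j j = 2)
    (hAij : A i j = -1) (hAji : A j i = -3) (hsym : (d i : ℤ) * A i j = d j * A j i)
    (hdj : d j ≠ 0) (hr : r ≠ 0) :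
    (pseudoRefl (braidCoeff A d r) i ∘ pseudoRefl (braidCoeff A d r) j) ∘
        (pseudoRefl (braidCoeff A d r) i ∘ pseudoRefl (braidCoeff A d r) j) ∘
        (pseudoRefl (braidCoeff A d r) i ∘ pseudoRefl (braidCoeff A d r) j) =
      (pseudoRefl (braidCoeff A d r) j ∘ pseudoRefl (braidCoeff A d r) i) ∘
        (pseudoRefl (braidCoeff A d r) j ∘ pseudoRefl (braidCoeff A d r) i) ∘
        (pseudoRefl (braidCoeff A d r) j ∘ pseudoRefl (braidCoeff A d r) i) := by
  have hd : d i = 3 * d j := by rw [hAij, hAji] at hsym; omega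
  have hdi : d i ≠ 0 := by omega
  refine pseudoRefl_braid_six hij (qvar ^ (d j * r)) ?_ (braidCoeff_self hj hdj hr)
    (braidCoeff_of_eq_neg_three hAji hd hdj hr) (braidCoeff_of_eq_neg_one hAij hdi hr)
  rw [braidCoeff_self hi hdi hr, hd, mul_assoc, pow_mul', ← pow_mul]

end BraidRelations

theorem stmt_0 {n : ℕ} (A : Matrix (Fin n) (Fin n) ℤ) (d : Fin n → ℕ)
    (hdiag : ∀ i, A i i = 2) (hoff : ∀ i j, i ≠ j → A i j ≤ 0)
    (hd : ∀ i, 1 ≤ d i) (hsym : ∀ i j, (d i : ℤ) * A i j = (d j : ℤ) * A j i)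
    (r : ℕ) (hr : 1 ≤ r) (i j : Fin n) (hij : i ≠ j) :
    (A i j * A j i = 0 →
      T0 A d r i ∘ T0 A d r j = T0 A d r j ∘ T0 A d r i) ∧
    (A i j * A j i = 1 →
      T0 A d r i ∘ T0 A d r j ∘ T0 A d r i = T0 A d r j ∘ T0 A d r i ∘ T0 A d r j) ∧
    (A i j * A j i = 2 →
      (T0 A d r i ∘ T0 A d r j) ∘ (T0 A d r i ∘ T0 A d r j) =
        (T0 A d r j ∘ T0 A d r i) ∘ (T0 A d r j ∘ T0 A d r i)) ∧
    (A i j * A j i = 3 →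
      (T0 A d r i ∘ T0 A d r j) ∘ (T0 A d r i ∘ T0 A d r j) ∘ (T0 A d r i ∘ T0 A d r j) =
        (T0 A d r j ∘ T0 A d r i) ∘ (T0 A d r j ∘ T0 A d r i) ∘ (T0 A d r j ∘ T0 A d r i)) := by
  have hr0 : r ≠ 0 := by omega
  have hd0 (k : Fin n) : d k ≠ 0 := by have := hd k; omega
  have hoff' := hoff j i hij.symm
  rw [T0_eq_pseudoRefl]
  refine ⟨fun h => ?_, fun h => ?_, fun h => ?_, fun h => ?_⟩
  · obtain ⟨hAij, hAji⟩ :=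
      eq_zero_and_eq_zero_of_mul_eq_zero (by exact_mod_cast hd0 i) (by exact_mod_cast hd0 j)
        (hsym i j) h
    exact pseudoRefl_comm hij (braidCoeff_of_eq_zero hAji) (braidCoeff_of_eq_zero hAij)
  · obtain ⟨hAij, hAji⟩ | ⟨hAij, hAji⟩ :=
      eq_neg_one_or_eq_neg_one_of_mul_eq (hoff i j hij) hoff' h le_rfl (by norm_num) <;>
    exact braidCoeff_braid_three hij (hdiag i) (hdiag j) hAij hAji (hsym i j) (hd0 j) hr0
  · obtain ⟨hAij, hAji⟩ | ⟨hAij, hAji⟩ :=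
      eq_neg_one_or_eq_neg_one_of_mul_eq (hoff i j hij) hoff' h (by norm_num) (by norm_num)
    · exact braidCoeff_braid_four hij (hdiag i) (hdiag j) hAij hAji (hsym i j) (hd0 j) hr0
    · exact (braidCoeff_braid_four hij.symm (hdiag j) (hdiag i) hAji hAij (hsym j i) (hd0 i)
        hr0).symm
  · obtain ⟨hAij, hAji⟩ | ⟨hAij, hAji⟩ :=
      eq_neg_one_or_eq_neg_one_of_mul_eq (hoff i j hij) hoff' h (by norm_num) le_rfl
    · exact braidCoeff_braid_six hij (hdiag i) (hdiag j) hAij hAji (hsym i j) (hd0 j) hr0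
    · exact (braidCoeff_braid_six hij.symm (hdiag j) (hdiag i) hAji hAij (hsym j i) (hd0 i)
        hr0).symm
end
end

section
/- Any polynomial π(u) ∈ C(q)[u] with constant term 1 which splits over C(q) can be written uniquely (up to order subject to the stated normalization) as a product π(u) = Π_{j=1}^{s} π_{m_j, a_j}(u), where m_j ∈ Z_+, a_j ∈ C(q)^×, and for j < ℓ one has a_j/a_ℓ ≠ q^{±(m_j + m_ℓ − 2p)} for all 0 ≤ p < min(m_j, m_ℓ). -/
/- STATEMENT 4: Every split polynomial `π ∈ ℂ(q)[u]` with constant term 1 factors uniquely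
(up to order) as a product of `q`-strings `π_{m_j,a_j}` in normal form:
`j < ℓ → a_j/a_ℓ ≠ q^{±(m_j+m_ℓ−2p)}` for `0 ≤ p < min(m_j, m_ℓ)`. -/

noncomputable section

open Polynomial

/-- The `q`-string polynomial `π_{m,a}(u) = Π_{r=1}^m (1 − a q^{m−2r+1} u)`. -/
noncomputable def qstring (a : Kq) (m : ℕ) : Polynomial Kq :=
  ∏ r ∈ Finset.Icc 1 m, (1 - C (a * qvar ^ ((m : ℤ) - 2 * (r : ℤ) + 1)) * X)

/-- The normal form condition on the data `(m_j, a_j)_{j < s}`. -/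
def NormalForm (s : ℕ) (m : Fin s → ℕ) (a : Fin s → Kq) : Prop :=
  (∀ j, 1 ≤ m j) ∧ (∀ j, a j ≠ 0) ∧
  ∀ j l : Fin s, j < l → ∀ p : ℕ, p < min (m j) (m l) →
    a j / a l ≠ qvar ^ ((m j : ℤ) + (m l : ℤ) - 2 * p) ∧
    a j / a l ≠ qvar ^ (-((m j : ℤ) + (m l : ℤ) - 2 * p))

/-!
A split polynomial with constant term `1` is `∏_{b ∈ B} (1 - b u)` for a unique multiset `B` of
nonzero elements, and `π_{m,a}` contributes the geometric string `b, b q², …, b q^{2(m-1)}` with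
`b = a q^{1-m}`. On a `q²`-orbit, identified with `ℤ` because `q` has infinite order, strings are
integer intervals, and the normal form says exactly that any two of them are nested, or disjoint and
not adjacent. Such a decomposition of `B` exists and is unique: take `b ∈ B` with `b q⁻² ∉ B` and
let the run `b, b q², …` continue as long as it stays in `B`. Every decomposition contains this run
as one of its strings, and removing it leaves a smaller multiset.
-/

section StringDecomposition

variable {G : Type*} [Group G] (g : G)

def geomString (b : G) (m : ℕ) : Multiset G :=
  (Multiset.range m).map fun i : ℕ => b * g ^ (i : ℤ)

def stringSum (D : Multiset (G × ℕ)) : Multiset G :=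
  (D.map fun P => geomString g P.1 P.2).sum

/-- Seen as integer intervals `[0, m)` and `[k, k + m')`, the two strings are nested, or are
disjoint and not adjacent. -/
def InGeneralPosition (P Q : G × ℕ) : Prop :=
  ∀ k : ℤ, Q.1 = P.1 * g ^ k →
    (k ≤ 0 ∧ P.2 ≤ k + Q.2) ∨ (0 ≤ k ∧ k + Q.2 ≤ P.2) ∨ P.2 + 1 ≤ k ∨ k + Q.2 + 1 ≤ 0

def IsNormalFamily (D : Multiset (G × ℕ)) : Prop :=
  (∀ P ∈ D, 1 ≤ P.2) ∧ ∀ P ∈ D, ∀ Q ∈ D, InGeneralPosition g P Q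

def IsBottomRun (B : Multiset G) (b : G) (m : ℕ) : Prop :=
  1 ≤ m ∧ b * g ^ (-1 : ℤ) ∉ B ∧ (∀ i : ℤ, 0 ≤ i → i < m → b * g ^ i ∈ B) ∧ b * g ^ (m : ℤ) ∉ B

variable {g}

theorem mem_geomString {b x : G} {m : ℕ} :
    x ∈ geomString g b m ↔ ∃ i : ℤ, 0 ≤ i ∧ i < m ∧ b * g ^ i = x := by
  simp only [geomString, Multiset.mem_map, Multiset.mem_range]
  constructor
  · rintro ⟨i, hi, rfl⟩
    exact ⟨i, by omega, by omega, rfl⟩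
  · rintro ⟨i, hi0, him, rfl⟩
    exact ⟨i.toNat, by omega, by rw [Int.toNat_of_nonneg hi0]⟩

theorem mul_zpow_mem_geomString {b : G} {m : ℕ} {i : ℤ} (hi0 : 0 ≤ i) (him : i < m) :
    b * g ^ i ∈ geomString g b m :=
  mem_geomString.2 ⟨i, hi0, him, rfl⟩

theorem nodup_geomString (hg : ¬IsOfFinOrder g) (b : G) (m : ℕ) : (geomString g b m).Nodup :=
  (Multiset.nodup_range m).map fun i j h => by
    exact_mod_cast injective_zpow_iff_not_isOfFinOrder.2 hg (mul_left_cancel h)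

theorem InGeneralPosition.symm {P Q : G × ℕ} (h : InGeneralPosition g P Q) :
    InGeneralPosition g Q P := by
  intro k hk
  have := h (-k) (by rw [hk, mul_assoc, ← zpow_add, add_neg_cancel, zpow_zero, mul_one])
  omega

theorem inGeneralPosition_self (hg : ¬IsOfFinOrder g) (P : G × ℕ) : InGeneralPosition g P P := by
  intro k hk
  have : k = 0 := injective_zpow_iff_not_isOfFinOrder.2 hg <| by
    simpa using (mul_eq_left.1 hk.symm)
  omega

theorem mul_zpow_mem_stringSum {D : Multiset (G × ℕ)} {P : G × ℕ} (hP : P ∈ D) {i : ℤ}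
    (hi0 : 0 ≤ i) (hi : i < P.2) : P.1 * g ^ i ∈ stringSum g D :=
  Multiset.mem_of_le (Multiset.le_sum_of_mem (Multiset.mem_map_of_mem _ hP))
    (mul_zpow_mem_geomString hi0 hi)

theorem exists_of_mem_stringSum {D : Multiset (G × ℕ)} {x : G} (hx : x ∈ stringSum g D) :
    ∃ P ∈ D, ∃ i : ℤ, 0 ≤ i ∧ i < P.2 ∧ P.1 * g ^ i = x := by
  obtain ⟨_, hs, hxs⟩ := Multiset.mem_join.1 hx
  obtain ⟨P, hP, rfl⟩ := Multiset.mem_map.1 hs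
  exact ⟨P, hP, mem_geomString.1 hxs⟩

theorem exists_run_of_mem (hg : ¬IsOfFinOrder g) {B : Multiset G} {b : G} (hb : b ∈ B) :
    ∃ m : ℕ, 1 ≤ m ∧ (∀ i : ℤ, 0 ≤ i → i < m → b * g ^ i ∈ B) ∧ b * g ^ (m : ℤ) ∉ B := by
  classical
  have hescape : ∃ n : ℕ, b * g ^ n ∉ B := by
    by_contra! hall
    obtain ⟨i, j, hij, heq⟩ :=
      B.finite_toSet.exists_lt_map_eq_of_forall_mem (f := fun n : ℕ => b * g ^ n) hall
    exact hij.ne (injective_pow_iff_not_isOfFinOrder.2 hg (mul_left_cancel heq))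
  refine ⟨Nat.find hescape, Nat.one_le_iff_ne_zero.2 fun h0 => ?_, fun i hi0 hi => ?_, ?_⟩
  · exact absurd hb (by simpa [h0] using Nat.find_spec hescape)
  · lift i to ℕ using hi0
    simpa using Nat.find_min hescape (by exact_mod_cast hi)
  · simpa using Nat.find_spec hescape

theorem exists_isBottomRun (hg : ¬IsOfFinOrder g) {B : Multiset G} (hB : B ≠ 0) :
    ∃ b m, IsBottomRun g B b m := by
  obtain ⟨x, hx⟩ := Multiset.exists_mem_of_ne_zero hB
  obtain ⟨n, hn1, hdown, hnot⟩ := exists_run_of_mem (g := g⁻¹) (by rwa [isOfFinOrder_inv_iff]) hx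
  have hb : x * g ^ (1 - n : ℤ) ∈ B := by
    simpa [inv_zpow', neg_sub] using hdown (n - 1) (by omega) (by omega)
  obtain ⟨m, hm1, hup, htop⟩ := exists_run_of_mem hg hb
  refine ⟨_, m, hm1, ?_, hup, htop⟩
  rwa [mul_assoc, ← zpow_add, show (1 - n + -1 : ℤ) = -n by ring, zpow_neg, ← inv_zpow]

theorem IsBottomRun.geomString_le (hg : ¬IsOfFinOrder g) {B : Multiset G} {b : G} {m : ℕ}
    (h : IsBottomRun g B b m) : geomString g b m ≤ B := by
  rw [Multiset.le_iff_subset (nodup_geomString hg b m)]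
  intro x hx
  obtain ⟨i, hi0, hi, rfl⟩ := mem_geomString.1 hx
  exact h.2.2.1 i hi0 hi

theorem lt_geomString_add (B : Multiset G) (b : G) {m : ℕ} (hm : 1 ≤ m) :
    B < geomString g b m + B :=
  lt_add_of_pos_left B <| pos_iff_ne_zero.2 <| Multiset.card_pos.1 <| by
    rwa [geomString, Multiset.card_map, Multiset.card_range]

/-- A string inside `B` can neither reach `b g⁻¹` nor `b gᵐ`, which forces general position. -/
theorem IsBottomRun.inGeneralPosition {B : Multiset G} {b : G} {m : ℕ} (h : IsBottomRun g B b m)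
    {P : G × ℕ} (hPB : ∀ i : ℤ, 0 ≤ i → i < P.2 → P.1 * g ^ i ∈ B) :
    InGeneralPosition g (b, m) P := by
  obtain ⟨-, hbot, -, htop⟩ := h
  intro k hk
  have hshift : ∀ j : ℤ, P.1 * g ^ (j - k) = b * g ^ j := fun j => by
    rw [hk, mul_assoc, ← zpow_add, add_sub_cancel]
  have hlow : ¬(k < 0 ∧ 0 ≤ k + P.2) := fun ⟨h1, h2⟩ =>
    hbot (hshift (-1) ▸ hPB _ (by omega) (by omega))
  have hhigh : ¬(0 ≤ k ∧ k ≤ m ∧ (m : ℤ) < k + P.2) := fun ⟨h1, h2, h3⟩ =>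
    htop (hshift m ▸ hPB _ (by omega) (by omega))
  dsimp only
  omega

theorem stringSum_cons (P : G × ℕ) (D : Multiset (G × ℕ)) :
    stringSum g (P ::ₘ D) = geomString g P.1 P.2 + stringSum g D := by
  simp [stringSum]

theorem IsNormalFamily.cons (hg : ¬IsOfFinOrder g) {D : Multiset (G × ℕ)}
    (hD : IsNormalFamily g D) {b : G} {m : ℕ}
    (h : IsBottomRun g (geomString g b m + stringSum g D) b m) :
    IsNormalFamily g ((b, m) ::ₘ D) := by
  have hnew : ∀ P ∈ D, InGeneralPosition g (b, m) P := fun P hP =>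
    h.inGeneralPosition fun i hi0 hi =>
      Multiset.mem_add.2 (Or.inr (mul_zpow_mem_stringSum hP hi0 hi))
  refine ⟨Multiset.forall_mem_cons.2 ⟨h.1, hD.1⟩, ?_⟩
  simp only [Multiset.forall_mem_cons]
  exact ⟨⟨inGeneralPosition_self hg _, hnew⟩,
    fun P hP => ⟨(hnew P hP).symm, hD.2 P hP⟩⟩

theorem exists_isNormalFamily_stringSum_eq (hg : ¬IsOfFinOrder g) (B : Multiset G) :
    ∃ D, IsNormalFamily g D ∧ stringSum g D = B := by
  induction B using Multiset.strongInductionOn with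
  | _ B ih =>
    rcases eq_or_ne B 0 with rfl | hB
    · exact ⟨0, by simp [IsNormalFamily], by simp [stringSum]⟩
    obtain ⟨b, m, h⟩ := exists_isBottomRun hg hB
    obtain ⟨B', rfl⟩ := Multiset.le_iff_exists_add.1 (h.geomString_le hg)
    obtain ⟨D, hD, rfl⟩ := ih _ (lt_geomString_add _ b h.1)
    exact ⟨_, hD.cons hg h, stringSum_cons _ _⟩

theorem IsBottomRun.add_le_of_lt_zero {D : Multiset (G × ℕ)} {b : G} {m : ℕ}
    (h : IsBottomRun g (stringSum g D) b m) {Q : G × ℕ} (hQ : Q ∈ D) {k : ℤ}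
    (hk : Q.1 = b * g ^ k) (hk0 : k < 0) : k + Q.2 ≤ -1 := by
  by_contra hreach
  refine h.2.1 ?_
  rw [show b * g ^ (-1 : ℤ) = Q.1 * g ^ (-k - 1) by rw [hk, mul_assoc, ← zpow_add]; congr 2; ring]
  exact mul_zpow_mem_stringSum hQ (by omega) (by omega)

/-- A longest string of `D` starting at `b` has length `m`: a shorter one would be overlapped,
neither nested nor separated, by the string of `D` through the next element of the run. -/
theorem IsNormalFamily.mem_of_isBottomRun {D : Multiset (G × ℕ)} (hD : IsNormalFamily g D)
    {b : G} {m : ℕ} (h : IsBottomRun g (stringSum g D) b m) : (b, m) ∈ D := by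
  classical
  have hstart : ∀ Q ∈ D, ∀ (j k : ℤ), 0 ≤ j → j < Q.2 → 0 ≤ k → Q.1 * g ^ j = b * g ^ k →
      Q.1 = b * g ^ (k - j) ∧ 0 ≤ k - j := fun Q hQ j k hj0 hj hk hjk => by
    have hQ1 : Q.1 = b * g ^ (k - j) := by
      rw [zpow_sub, ← mul_assoc, ← hjk, mul_inv_cancel_right]
    refine ⟨hQ1, not_lt.1 fun hneg => ?_⟩
    have := h.add_le_of_lt_zero hQ hQ1 hneg
    omega
  obtain ⟨hm, -, hrun, htop⟩ := h
  obtain ⟨P, hP, i, hi0, hi, hPb⟩ := exists_of_mem_stringSum (hrun 0 le_rfl (by omega))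
  obtain ⟨hP1, hi⟩ := hstart P hP i 0 hi0 hi le_rfl hPb
  obtain ⟨P₀, hP₀S, hmax⟩ := (D.toFinset.filter (·.1 = b)).exists_max_image Prod.snd
    ⟨P, by simp [hP, hP1, show i = 0 by omega]⟩
  simp only [Finset.mem_filter, Multiset.mem_toFinset, and_imp] at hP₀S hmax
  obtain ⟨hP₀, hP₀b⟩ := hP₀S
  have hle : P₀.2 ≤ m := by
    by_contra! hlt
    exact htop (hP₀b ▸ mul_zpow_mem_stringSum hP₀ (by omega) (by omega))
  have hge : m ≤ P₀.2 := by
    by_contra! hlt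
    obtain ⟨Q, hQ, j, hj0, hj, hQj⟩ := exists_of_mem_stringSum (hrun P₀.2 (by omega) (by omega))
    obtain ⟨hQ1, hk⟩ := hstart Q hQ j P₀.2 hj0 hj (by omega) hQj
    have hk0 : (P₀.2 : ℤ) - j ≠ 0 := fun h0 => by
      have := hmax Q hQ (by simpa [h0] using hQ1)
      omega
    have := hD.2 P₀ hP₀ Q hQ _ (hP₀b ▸ hQ1)
    omega
  rwa [← show P₀ = (b, m) from Prod.ext hP₀b (le_antisymm hle hge)]

theorem IsNormalFamily.of_cons {P : G × ℕ} {D : Multiset (G × ℕ)}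
    (h : IsNormalFamily g (P ::ₘ D)) : IsNormalFamily g D :=
  ⟨fun Q hQ => h.1 Q (Multiset.mem_cons_of_mem hQ),
    fun Q hQ R hR => h.2 Q (Multiset.mem_cons_of_mem hQ) R (Multiset.mem_cons_of_mem hR)⟩

theorem IsNormalFamily.eq_zero {D : Multiset (G × ℕ)} (hD : IsNormalFamily g D)
    (h : stringSum g D = 0) : D = 0 :=
  Multiset.eq_zero_of_forall_notMem fun P hP => Multiset.notMem_zero _ <|
    h ▸ mul_zpow_mem_stringSum hP le_rfl (by have := hD.1 P hP; omega)

theorem IsNormalFamily.eq_of_stringSum_eq (hg : ¬IsOfFinOrder g) {D D' : Multiset (G × ℕ)}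
    (hD : IsNormalFamily g D) (hD' : IsNormalFamily g D')
    (h : stringSum g D = stringSum g D') : D = D' := by
  generalize hB : stringSum g D = B at h
  induction B using Multiset.strongInductionOn generalizing D D' with
  | _ B ih =>
    rcases eq_or_ne B 0 with rfl | hB0
    · rw [hD.eq_zero hB, hD'.eq_zero h.symm]
    obtain ⟨b, m, hrun⟩ := exists_isBottomRun hg hB0
    obtain ⟨E, rfl⟩ := Multiset.exists_cons_of_mem (hD.mem_of_isBottomRun (hB ▸ hrun))
    obtain ⟨E', rfl⟩ := Multiset.exists_cons_of_mem (hD'.mem_of_isBottomRun (h ▸ hrun))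
    rw [stringSum_cons] at hB h
    subst hB
    rw [ih _ (lt_geomString_add _ b hrun.1) hD.of_cons hD'.of_cons rfl (add_left_cancel h)]

end StringDecomposition

theorem exists_equiv_of_map_univ_val_eq {ι ι' α : Type*} [Fintype ι] [Fintype ι']
    {v : ι → α} {v' : ι' → α} (h : Finset.univ.val.map v = Finset.univ.val.map v') :
    ∃ σ : ι ≃ ι', ∀ i, v' (σ i) = v i := by
  classical
  have hfiber : ∀ c, Fintype.card {i // v i = c} = Fintype.card {i' // v' i' = c} := fun c => by
    simpa [Fintype.card_subtype, Multiset.count_map, eq_comm, Finset.card_def,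
      Finset.filter_val] using congrArg (Multiset.count c) h
  exact ⟨Equiv.ofFiberEquiv fun c => Fintype.equivOfCardEq (hfiber c), Equiv.ofFiberEquiv_map _⟩

section OneSubProd

variable {K : Type*} [Field K]

def prodOneSub (B : Multiset Kˣ) : K[X] := (B.map fun b : Kˣ => 1 - C (b : K) * X).prod

theorem prodOneSub_add (B B' : Multiset Kˣ) :
    (prodOneSub (B + B') : K[X]) = prodOneSub B * prodOneSub B' := by
  simp [prodOneSub]

theorem coeff_zero_prodOneSub (B : Multiset Kˣ) : (prodOneSub B).coeff 0 = (1 : K) := by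
  simp [prodOneSub, coeff_zero_eq_eval_zero, eval_multiset_prod]

theorem roots_prodOneSub (B : Multiset Kˣ) :
    (prodOneSub B).roots = B.map fun b : Kˣ => ((b⁻¹ : Kˣ) : K) := by
  have hroots : ∀ b : Kˣ, (1 - C (b : K) * X).roots = {((b⁻¹ : Kˣ) : K)} := fun b => by
    rw [sub_eq_add_neg, add_comm, ← neg_mul, ← C_neg, ← C_1, roots_C_mul_X_add_C _ (by simp)]
    simp
  rw [prodOneSub, roots_multiset_prod, Multiset.bind_map]
  · simp [hroots]
  · simp only [Multiset.mem_map, not_exists, not_and]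
    intro b _ h
    simpa using congrArg (coeff · 0) h

theorem prodOneSub_injective : Function.Injective (prodOneSub (K := K)) := fun B B' h =>
  Multiset.map_injective (fun b b' h => inv_injective (Units.val_injective h)) <| by
    rw [← roots_prodOneSub, ← roots_prodOneSub, h]

theorem exists_eq_prodOneSub {p : K[X]} (h0 : p.coeff 0 = 1) (hp : p.Splits) :
    ∃ B : Multiset Kˣ, p = prodOneSub B := by
  obtain ⟨R, hR⟩ : ∃ R : Multiset Kˣ, R.map (↑) = p.roots := by
    refine CanLift.prf (β := Multiset Kˣ) p.roots fun r hr => isUnit_iff_ne_zero.2 fun hr0 => ?_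
    have := (mem_roots'.1 (hr0 ▸ hr)).2
    rw [IsRoot, ← coeff_zero_eq_eval_zero, h0] at this
    exact one_ne_zero this
  have hfactor : ∀ u : Kˣ, X - C (u : K) = C (-(u : K)) * (1 - C ((u⁻¹ : Kˣ) : K) * X) := by
    intro u
    rw [mul_sub, mul_one, ← mul_assoc, ← C_mul, neg_mul, Units.mul_inv, C_neg, C_neg, C_1]
    ring
  have hp' : p = C (p.leadingCoeff * (R.map fun u : Kˣ => -(u : K)).prod) *
      prodOneSub (R.map (·⁻¹)) := by
    conv_lhs => rw [hp.eq_prod_roots, ← hR]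
    simp only [Multiset.map_map, Function.comp_def, hfactor, Multiset.prod_map_mul, prodOneSub,
      map_mul, map_multiset_prod, mul_assoc]
  refine ⟨R.map (·⁻¹), hp'.trans ?_⟩
  have hc := congrArg (coeff · 0) hp'
  simp only [coeff_C_mul, coeff_zero_prodOneSub, h0, mul_one] at hc
  rw [← hc, C_1, one_mul]

theorem prodOneSub_sum (S : Multiset (Multiset Kˣ)) :
    prodOneSub S.sum = (S.map (prodOneSub (K := K))).prod := by
  induction S using Multiset.induction_on with
  | empty => simp [prodOneSub]
  | cons B S ih => simp [prodOneSub_add, ih]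

end OneSubProd

def qUnit : Kqˣ := Units.mk0 qvar RatFunc.X_ne_zero

theorem qvar_pow_ne_one_s4 {n : ℕ} (hn : n ≠ 0) : qvar ^ n ≠ 1 := by
  intro h
  have hX : (Polynomial.X : ℂ[X]) ^ n = 1 :=
    RatFunc.algebraMap_injective ℂ (by simpa [qvar, RatFunc.algebraMap_X] using h)
  simpa [hn] using congrArg natDegree hX

theorem not_isOfFinOrder_qUnit_sq : ¬IsOfFinOrder (qUnit ^ 2) := by
  rw [isOfFinOrder_iff_pow_eq_one]
  rintro ⟨n, hn, h⟩
  refine qvar_pow_ne_one_s4 (n := 2 * n) (by omega) ?_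
  rw [pow_mul]
  exact congrArg Units.val h

def stringBottom (a : Kqˣ) (m : ℕ) : Kqˣ := a * qUnit ^ (1 - m : ℤ)

theorem stringBottom_mul_zpow (a : Kqˣ) (m : ℕ) (k : ℤ) :
    stringBottom a m * (qUnit ^ 2) ^ k = a * qUnit ^ (1 - m + 2 * k : ℤ) := by
  rw [stringBottom, ← zpow_natCast, ← zpow_mul, mul_assoc, ← zpow_add, Nat.cast_ofNat]

theorem qstring_eq_prodOneSub (a : Kqˣ) (m : ℕ) :
    qstring a m = prodOneSub (geomString (qUnit ^ 2) (stringBottom a m) m) := by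
  rw [qstring, prodOneSub, geomString, Multiset.map_map, ← Finset.range_val, Finset.prod_map_val]
  refine Finset.prod_nbij' (fun r => m - r) (fun i => m - i) ?_ ?_ ?_ ?_ fun r hr => ?_
  iterate 4 (intro _ h; simp only [Finset.mem_Icc, Finset.mem_range] at h ⊢; omega)
  rw [Function.comp_apply, stringBottom_mul_zpow, Units.val_mul, Units.val_zpow_eq_zpow_val]
  simp only [Finset.mem_Icc] at hr
  congr 5
  push_cast [hr.2]
  ring

theorem stringBottom_eq_mul_zpow_iff (a a' : Kqˣ) (m m' : ℕ) (k : ℤ) :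
    stringBottom a' m' = stringBottom a m * (qUnit ^ 2) ^ k ↔
      (a / a' : Kq) = qvar ^ ((m : ℤ) - m' - 2 * k) := by
  rw [← Units.val_div_eq_div_val, show qvar = (qUnit : Kq) from rfl,
    ← Units.val_zpow_eq_zpow_val, Units.val_inj, stringBottom_mul_zpow, stringBottom, eq_comm,
    ← eq_mul_inv_iff_mul_eq, mul_assoc, ← zpow_neg, ← zpow_add, div_eq_iff_eq_mul, mul_comm a',
    show 1 - m' + -(1 - m + 2 * k) = (m - m' - 2 * k : ℤ) by ring]

theorem inGeneralPosition_stringBottom_iff (a a' : Kqˣ) (m m' : ℕ) :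
    InGeneralPosition (qUnit ^ 2) (stringBottom a m, m) (stringBottom a' m', m') ↔
      ∀ p : ℕ, p < min m m' → (a / a' : Kq) ≠ qvar ^ ((m : ℤ) + m' - 2 * p) ∧
        (a / a' : Kq) ≠ qvar ^ (-((m : ℤ) + m' - 2 * p)) := by
  simp only [InGeneralPosition, stringBottom_eq_mul_zpow_iff]
  constructor
  · intro h p hp
    refine ⟨fun heq => ?_, fun heq => ?_⟩
    · have := h (p - m') (by rw [heq]; congr 1; ring)
      omega
    · have := h (m - p) (by rw [heq]; congr 1; ring)
      omega
  · intro h k hk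
    by_contra hbad
    obtain ⟨p, hp, hkp⟩ : ∃ p : ℕ, p < min m m' ∧ (k = p - m' ∨ k = m - p) := by
      rcases le_or_gt k 0 with hk0 | hk0
      · exact ⟨(k + m').toNat, by omega, by omega⟩
      · exact ⟨(m - k).toNat, by omega, by omega⟩
    rcases hkp with rfl | rfl
    · exact (h p hp).1 (by rw [hk]; congr 1; ring)
    · exact (h p hp).2 (by rw [hk]; congr 1; ring)

def qstringFamily {s : ℕ} (m : Fin s → ℕ) (a : Fin s → Kqˣ) : Multiset (Kqˣ × ℕ) :=
  Finset.univ.val.map fun j => (stringBottom (a j) (m j), m j)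

theorem prod_qstring_eq_prodOneSub {s : ℕ} (m : Fin s → ℕ) (a : Fin s → Kqˣ) :
    ∏ j, qstring (a j) (m j) = prodOneSub (stringSum (qUnit ^ 2) (qstringFamily m a)) := by
  simp only [qstring_eq_prodOneSub, stringSum, qstringFamily, Multiset.map_map, prodOneSub_sum,
    Function.comp_def, Finset.prod_eq_multiset_prod]

theorem normalForm_iff_isNormalFamily {s : ℕ} (m : Fin s → ℕ) (a : Fin s → Kqˣ) :
    NormalForm s m (fun j => a j) ↔ IsNormalFamily (qUnit ^ 2) (qstringFamily m a) := by
  simp only [NormalForm, IsNormalFamily, qstringFamily, Multiset.mem_map, Finset.mem_val,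
    Finset.mem_univ, true_and, forall_exists_index, forall_apply_eq_imp_iff,
    ← inGeneralPosition_stringBottom_iff, Units.ne_zero, ne_eq, not_false_eq_true, implies_true]
  refine and_congr_right fun _ => ⟨fun h j l => ?_, fun h j l _ => h j l⟩
  rcases lt_trichotomy j l with hjl | rfl | hlj
  · exact h j l hjl
  · exact inGeneralPosition_self not_isOfFinOrder_qUnit_sq _
  · exact (h l j hlj).symm

theorem exists_qstringFamily_eq (D : Multiset (Kqˣ × ℕ)) :
    ∃ (s : ℕ) (m : Fin s → ℕ) (a : Fin s → Kqˣ), qstringFamily m a = D := by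
  refine ⟨D.toList.length, fun j => (D.toList.get j).2,
    fun j => (D.toList.get j).1 * qUnit ^ ((D.toList.get j).2 - 1 : ℤ), ?_⟩
  have hbottom : ∀ (b : Kqˣ) (n : ℕ), stringBottom (b * qUnit ^ (n - 1 : ℤ)) n = b := by
    intro b n
    rw [stringBottom, mul_assoc, ← zpow_add, sub_add_sub_cancel', sub_self, zpow_zero, mul_one]
  simp only [qstringFamily, hbottom, Prod.mk.eta, Fin.univ_val_map, List.ofFn_get,
    Multiset.coe_toList]

theorem stmt_4 (π : Polynomial Kq) (h0 : π.coeff 0 = 1)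
    (hsplit : π.Splits) :
    (∃ (s : ℕ) (m : Fin s → ℕ) (a : Fin s → Kq), NormalForm s m a ∧
      π = ∏ j, qstring (a j) (m j)) ∧
    (∀ (s : ℕ) (m : Fin s → ℕ) (a : Fin s → Kq) (s' : ℕ) (m' : Fin s' → ℕ) (a' : Fin s' → Kq),
      NormalForm s m a → NormalForm s' m' a' →
      π = ∏ j, qstring (a j) (m j) → π = ∏ j, qstring (a' j) (m' j) →
      ∃ σ : Fin s ≃ Fin s', ∀ j, m j = m' (σ j) ∧ a j = a' (σ j)) := by
  constructor
  · obtain ⟨B, rfl⟩ := exists_eq_prodOneSub h0 hsplit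
    obtain ⟨D, hD, rfl⟩ := exists_isNormalFamily_stringSum_eq not_isOfFinOrder_qUnit_sq B
    obtain ⟨s, m, a, rfl⟩ := exists_qstringFamily_eq D
    exact ⟨s, m, fun j => a j, (normalForm_iff_isNormalFamily m a).2 hD,
      (prod_qstring_eq_prodOneSub m a).symm⟩
  · intro s m a s' m' a' h h' hπ hπ'
    lift a to Fin s → Kqˣ using fun j => (h.2.1 j).isUnit
    lift a' to Fin s' → Kqˣ using fun j => (h'.2.1 j).isUnit
    rw [prod_qstring_eq_prodOneSub] at hπ hπ'
    have hD := ((normalForm_iff_isNormalFamily m a).1 h).eq_of_stringSum_eq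
      not_isOfFinOrder_qUnit_sq ((normalForm_iff_isNormalFamily m' a').1 h')
      (prodOneSub_injective (hπ.symm.trans hπ'))
    obtain ⟨σ, hσ⟩ := exists_equiv_of_map_univ_val_eq hD
    refine ⟨σ, fun j => ?_⟩
    obtain ⟨hb, hm⟩ := Prod.mk.inj (hσ j)
    rw [hm] at hb
    exact ⟨hm.symm, congrArg Units.val (mul_right_cancel hb).symm⟩
end
end

section
/- In type G_2 (with node 1 the short root, a_{12} = −1, a_{21} = −3, d_1 = 1, d_2 = 3), the operators on A^2 defined by (T_1 h)_1 = −h_1(q^2 u), (T_1 h)_2 = h_2(u) + h_1(q^5 u) + h_1(q^3 u) + h_1(qu), (T_2 h)_2 = −h_2(q^6 u), (T_2 h)_1 = h_1(u) + h_2(qu), satisfy the braid relation (T_1 T_2)^3 = (T_2 T_1)^3. -/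
/- STATEMENT 14: Type `G₂` (node 1 short, `a₁₂ = −1`, `a₂₁ = −3`): the operators
`T₁(h₁,h₂) = (−h₁(q²u), h₂ + h₁(q⁵u) + h₁(q³u) + h₁(qu))` and
`T₂(h₁,h₂) = (h₁ + h₂(qu), −h₂(q⁶u))` satisfy `(T₁T₂)³ = (T₂T₁)³`. -/

noncomputable section

open PowerSeries

noncomputable def T1G2 (h : PowerSeries Kq × PowerSeries Kq) :
    PowerSeries Kq × PowerSeries Kq :=
  (-rescale (qvar ^ 2) h.1,
    h.2 + rescale (qvar ^ 5) h.1 + rescale (qvar ^ 3) h.1 + rescale qvar h.1)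

noncomputable def T2G2 (h : PowerSeries Kq × PowerSeries Kq) :
    PowerSeries Kq × PowerSeries Kq :=
  (h.1 + rescale qvar h.2, -rescale (qvar ^ 6) h.2)

theorem stmt_14 :
    (T1G2 ∘ T2G2) ∘ (T1G2 ∘ T2G2) ∘ (T1G2 ∘ T2G2) =
      (T2G2 ∘ T1G2) ∘ (T2G2 ∘ T1G2) ∘ (T2G2 ∘ T1G2) := by
  funext h
  simp only [Function.comp, T1G2, T2G2, map_add, map_neg, rescale_rescale, Prod.mk.injEq]
  constructor <;> ring_nf
end
end

section
/- In type B_2 = C_2 (a_{12} = −2, a_{21} = −1, d_1 = 1, d_2 = 2, say), the operators on A^2 defined by (T_1 h)_1 = −h_1(q^2 u), (T_1 h)_2 = h_2(u) + h_1(qu), (T_2 h)_2 = −h_2(q^4 u), (T_2 h)_1 = h_1(u) + h_2(q^3 u) + h_2(qu), satisfy the braid relation (T_1 T_2)^2 = (T_2 T_1)^2. -/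
/- STATEMENT 15: Type `B₂ = C₂` (`a₁₂ = −2`, `a₂₁ = −1`, `d₁ = 1`, `d₂ = 2`): the operators
`T₁(h₁,h₂) = (−h₁(q²u), h₂ + h₁(qu))` and `T₂(h₁,h₂) = (h₁ + h₂(q³u) + h₂(qu), −h₂(q⁴u))`
satisfy `(T₁T₂)² = (T₂T₁)²`. -/

noncomputable section

open PowerSeries

noncomputable def T1B2 (h : PowerSeries Kq × PowerSeries Kq) :
    PowerSeries Kq × PowerSeries Kq :=
  (-rescale (qvar ^ 2) h.1, h.2 + rescale qvar h.1)

noncomputable def T2B2 (h : PowerSeries Kq × PowerSeries Kq) :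
    PowerSeries Kq × PowerSeries Kq :=
  (h.1 + rescale (qvar ^ 3) h.2 + rescale qvar h.2, -rescale (qvar ^ 4) h.2)

theorem stmt_15 :
    (T1B2 ∘ T2B2) ∘ (T1B2 ∘ T2B2) = (T2B2 ∘ T1B2) ∘ (T2B2 ∘ T1B2) := by
  funext h
  simp only [Function.comp, T1B2, T2B2, map_add, map_neg, rescale_rescale, rescale_one]
  simp only [Prod.mk.injEq]
  constructor <;> ring_nf
end
end

section
/- In simply-laced type (all d_i = 1), the operators on A^n defined by (T_i h)_i = −h_i(q^2 u), (T_i h)_j = h_j(u) + h_i(qu) if a_{ij} = −1, and (T_i h)_j = h_j(u) if a_{ij} = 0 (i ≠ j), satisfy T_i T_j T_i = T_j T_i T_j whenever a_{ij} = −1 and T_i T_j = T_j T_i whenever a_{ij} = 0. -/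
/- STATEMENT 16: Simply-laced type: the operators `(T_i h)_i = −h_i(q²u)`,
`(T_i h)_j = h_j + h_i(qu)` if `a_{ij} = −1`, `(T_i h)_j = h_j` if `a_{ij} = 0` (`i ≠ j`),
satisfy `T_iT_jT_i = T_jT_iT_j` when `a_{ij} = −1` and `T_iT_j = T_jT_i` when `a_{ij} = 0`. -/

noncomputable section

open PowerSeries

noncomputable def TSL {n : ℕ} (A : Matrix (Fin n) (Fin n) ℤ)
    (i : Fin n) (h : Fin n → PowerSeries Kq) : Fin n → PowerSeries Kq :=
  fun j =>
    if j = i then -rescale (qvar ^ 2) (h i)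
    else if A i j = -1 then h j + rescale qvar (h i)
    else h j

lemma TSL_self {n : ℕ} (A : Matrix (Fin n) (Fin n) ℤ) (i : Fin n)
    (h : Fin n → PowerSeries Kq) : TSL A i h i = -rescale (qvar ^ 2) (h i) := by
  simp [TSL]

lemma TSL_neg {n : ℕ} (A : Matrix (Fin n) (Fin n) ℤ) {i k : Fin n} (hk : k ≠ i)
    (hA : A i k = -1) (h : Fin n → PowerSeries Kq) :
    TSL A i h k = h k + rescale qvar (h i) := by
  simp [TSL, hk, hA]

lemma TSL_zero {n : ℕ} (A : Matrix (Fin n) (Fin n) ℤ) {i k : Fin n} (hk : k ≠ i)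
    (hA : A i k ≠ -1) (h : Fin n → PowerSeries Kq) :
    TSL A i h k = h k := by
  simp [TSL, hk, hA]

theorem stmt_16 {n : ℕ} (A : Matrix (Fin n) (Fin n) ℤ)
    (hdiag : ∀ i, A i i = 2)
    (hoff : ∀ i j, i ≠ j → A i j = 0 ∨ A i j = -1)
    (hsym : ∀ i j, A i j = A j i)
    (i j : Fin n) (hij : i ≠ j) :
    (A i j = -1 →
      TSL A i ∘ TSL A j ∘ TSL A i = TSL A j ∘ TSL A i ∘ TSL A j) ∧
    (A i j = 0 → TSL A i ∘ TSL A j = TSL A j ∘ TSL A i) := by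
  have hji : A j i = A i j := (hsym i j).symm
  have hjine : j ≠ i := fun e => hij e.symm
  constructor
  · intro hA
    have hA' : A j i = -1 := hji.trans hA
    funext h k
    simp only [Function.comp_apply]
    by_cases hki : k = i
    · subst hki
      simp only [TSL_self, TSL_neg A hij hA', TSL_neg A hjine hA,
        map_add, map_neg, rescale_rescale]
      ring_nf
      all_goals abel
    · by_cases hkj : k = j
      · subst hkj
        simp only [TSL_self, TSL_neg A hij hA', TSL_neg A hjine hA,
          map_add, map_neg, rescale_rescale]
        ring_nf
        all_goals abel
      · rcases hoff i k (fun e => hki e.symm) with hik | hik <;>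
        rcases hoff j k (fun e => hkj e.symm) with hjk | hjk <;>
        simp only [TSL_self, TSL_neg A hij hA', TSL_neg A hjine hA,
          TSL_neg A hki, TSL_zero A hki, TSL_neg A hkj, TSL_zero A hkj, hik, hjk,
          ne_eq, not_false_eq_true, reduceCtorEq, map_add, map_neg, rescale_rescale,
          Int.reduceNeg] <;>
        first
          | rfl
          | (ring_nf
             all_goals abel)
  · intro hA
    have hA' : A j i ≠ -1 := by omega
    have hA2 : A i j ≠ -1 := by omega
    funext h k
    simp only [Function.comp_apply]
    by_cases hki : k = i
    · subst hki
      simp only [TSL_self, TSL_zero A hij hA']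
    · by_cases hkj : k = j
      · subst hkj
        simp only [TSL_self, TSL_zero A hjine hA2]
      · rcases hoff i k (fun e => hki e.symm) with hik | hik <;>
        rcases hoff j k (fun e => hkj e.symm) with hjk | hjk <;>
        simp only [TSL_self, TSL_zero A hij hA', TSL_zero A hjine hA2,
          TSL_neg A hki, TSL_zero A hki, TSL_neg A hkj, TSL_zero A hkj, hik, hjk,
          ne_eq, not_false_eq_true, reduceCtorEq, Int.reduceNeg] <;>
        first
          | rfl
          | abel
end
end
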